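/- If G is a finite simple graph with no universal vertex (i.e. no vertex adjacent to all other vertices), then η(G ∨ K₁) = η(G), where G ∨ K₁ is the graph obtained from G by adding a single new vertex adjacent to all vertices of G. -/

import Mathlib

open Classical in
/-- Sum of the labels `f` over the open neighborhood of `v` in `G`. -/
noncomputable def nbrSum {V : Type*} [Fintype V] (G : SimpleGraph V) (f : V → ℕ) (v : V) : ℕ :=
  ∑ w ∈ Finset.univ.filter (fun w => G.Adj v w), f w

open Classical in
/-- The degree of `v` in `G`. -/
noncomputable def deg {V : Type*} [Fintype V] (G : SimpleGraph V) (v : V) : ℕ :=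
  (Finset.univ.filter (fun w => G.Adj v w)).card

/-- `f : V → {1,…,k}` is an additive `k`-coloring of `G`: labels lie in `{1,…,k}` and
adjacent vertices get distinct open-neighborhood sums. -/
def IsAdditiveColoring {V : Type*} [Fintype V] (G : SimpleGraph V) (k : ℕ) (f : V → ℕ) : Prop :=
  (∀ v, 1 ≤ f v ∧ f v ≤ k) ∧ ∀ u v, G.Adj u v → nbrSum G f u ≠ nbrSum G f v

/-- The additive chromatic number `η(G)`: the least `k` admitting an additive `k`-coloring. -/
noncomputable def eta {V : Type*} [Fintype V] (G : SimpleGraph V) : ℕ :=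
  sInf {k | ∃ f : V → ℕ, IsAdditiveColoring G k f}

/-- The join `G ∨ K_q` of `G` with the complete graph on `q` vertices. -/
def joinK {α : Type*} (G : SimpleGraph α) (q : ℕ) : SimpleGraph (α ⊕ Fin q) where
  Adj x y :=
    match x, y with
    | Sum.inl u, Sum.inl v => G.Adj u v
    | Sum.inr i, Sum.inr j => i ≠ j
    | Sum.inl _, Sum.inr _ => True
    | Sum.inr _, Sum.inl _ => True
  symm := by
    constructor
    rintro (u | i) (v | j) h
    · exact G.adj_symm h
    · trivial
    · trivial
    · exact Ne.symm h
  loopless := by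
    constructor
    rintro (u | i) h
    · exact G.irrefl h
    · exact h rfl

/-!
Restricting an additive coloring of `G ∨ K₁` to `G` gives an additive coloring of `G`, since the
apex adds the same label to every neighborhood sum in `G`. Conversely, extend an additive coloring
`f` of `G` by the label `1` on the apex. The apex sees `∑ f`, whereas a vertex `u` of `G` sees
`nbrSum G f u + 1`; as `u` has a non-neighbor `w ≠ u`, the labels `f u + f w ≥ 2` are missing
from the latter, so the two sums differ.
-/

section JoinK

variable {α : Type*} (G : SimpleGraph α) {q : ℕ}

@[simp]
theorem joinK_adj_inl_inl {u v : α} : (joinK G q).Adj (.inl u) (.inl v) ↔ G.Adj u v := Iff.rfl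

@[simp]
theorem joinK_adj_inl_inr (u : α) (i : Fin q) : (joinK G q).Adj (.inl u) (.inr i) := trivial

@[simp]
theorem joinK_adj_inr_inl (i : Fin q) (u : α) : (joinK G q).Adj (.inr i) (.inl u) := trivial

@[simp]
theorem joinK_adj_inr_inr {i j : Fin q} : (joinK G q).Adj (.inr i) (.inr j) ↔ i ≠ j := Iff.rfl

variable [Fintype α]

theorem nbrSum_joinK_inl (g : α ⊕ Fin q → ℕ) (u : α) :
    nbrSum (joinK G q) g (.inl u) = nbrSum G (g ∘ .inl) u + ∑ i, g (.inr i) := by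
  classical
  simp [nbrSum, Finset.sum_filter, Fintype.sum_sum_type]

theorem nbrSum_joinK_one_inr (g : α ⊕ Fin 1 → ℕ) (i : Fin 1) :
    nbrSum (joinK G 1) g (.inr i) = ∑ v, g (.inl v) := by
  classical
  simp [nbrSum, Finset.sum_filter, Fintype.sum_sum_type, Subsingleton.elim i 0]

end JoinK

theorem nbrSum_add_add_le_sum {V : Type*} [Fintype V] (G : SimpleGraph V) (f : V → ℕ) {u w : V}
    (hwu : w ≠ u) (hnadj : ¬ G.Adj u w) :
    nbrSum G f u + f u + f w ≤ ∑ v, f v := by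
  classical
  set N := Finset.univ.filter (G.Adj u)
  have hwN : w ∉ N := by simpa [N] using hnadj
  have huN : u ∉ insert w N := by simp [N, hwu.symm]
  calc nbrSum G f u + f u + f w = ∑ v ∈ insert u (insert w N), f v := by
        rw [Finset.sum_insert huN, Finset.sum_insert hwN, nbrSum]; ring
    _ ≤ ∑ v, f v := Finset.sum_le_sum_of_subset (Finset.subset_univ _)

theorem IsAdditiveColoring.one_le {V : Type*} [Fintype V] [Nonempty V] {G : SimpleGraph V}
    {k : ℕ} {f : V → ℕ} (hf : IsAdditiveColoring G k f) : 1 ≤ k :=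
  let v := Classical.arbitrary V
  (hf.1 v).1.trans (hf.1 v).2

theorem IsAdditiveColoring.comp_inl {α : Type*} [Fintype α] {G : SimpleGraph α} {q k : ℕ}
    {g : α ⊕ Fin q → ℕ} (hg : IsAdditiveColoring (joinK G q) k g) :
    IsAdditiveColoring G k (g ∘ .inl) := by
  refine ⟨fun v => hg.1 (.inl v), fun u v huv h => hg.2 (.inl u) (.inl v) huv ?_⟩
  rw [nbrSum_joinK_inl, nbrSum_joinK_inl, h]

theorem IsAdditiveColoring.joinK_one {α : Type*} [Fintype α] {G : SimpleGraph α} {k : ℕ}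
    {f : α → ℕ} (hf : IsAdditiveColoring G k f) (hk : 1 ≤ k)
    (huniv : ¬ ∃ v, ∀ w, w ≠ v → G.Adj v w) :
    IsAdditiveColoring (joinK G 1) k (Sum.elim f 1) := by
  have hlt : ∀ u, nbrSum (joinK G 1) (Sum.elim f 1) (.inl u) <
      nbrSum (joinK G 1) (Sum.elim f 1) (.inr 0) := by
    intro u
    push Not at huniv
    obtain ⟨w, hwu, hnadj⟩ := huniv u
    have hmissing := nbrSum_add_add_le_sum G f hwu hnadj
    have hu := (hf.1 u).1
    have hw := (hf.1 w).1
    simp only [nbrSum_joinK_inl, nbrSum_joinK_one_inr, Sum.elim_comp_inl, Sum.elim_inl,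
      Sum.elim_inr, Pi.one_apply, Finset.univ_unique, Finset.sum_singleton]
    omega
  refine ⟨?_, ?_⟩
  · rintro (u | i)
    · exact hf.1 u
    · exact ⟨le_rfl, hk⟩
  · rintro (u | i) (v | j) h
    · rw [nbrSum_joinK_inl, nbrSum_joinK_inl, Sum.elim_comp_inl, Ne, add_left_inj]
      exact hf.2 u v h
    · exact (Subsingleton.elim j 0 ▸ hlt u).ne
    · exact (Subsingleton.elim i 0 ▸ hlt v).ne'
    · exact absurd (Subsingleton.elim i j) h

/-- If `G` has no universal vertex, then `η(G ∨ K₁) = η(G)`. -/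
theorem eta_join_K1 {α : Type*} [Fintype α] [Nonempty α] (G : SimpleGraph α)
    (huniv : ¬ ∃ v, ∀ w, w ≠ v → G.Adj v w) :
    eta (joinK G 1) = eta G := by
  refine congrArg sInf (Set.ext fun k => ⟨?_, ?_⟩)
  · rintro ⟨g, hg⟩
    exact ⟨g ∘ .inl, hg.comp_inl⟩
  · rintro ⟨f, hf⟩
    exact ⟨Sum.elim f 1, hf.joinK_one hf.one_le huniv⟩
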